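/- Fix κ ∈ ℝ and let f, g : [0, r] → ℝ≥0 be twice differentiable functions with f'' + κ f ≤ g'' + κ g pointwise, f(0) = g(0), and f'(0) ≤ g'(0). Then f ≤ g on [0, min{r, π_κ}]. -/

import Mathlib

/-!
Put `h = g - f`, so `h'' + κ h ≥ 0`, `h 0 = 0` and `h' 0 ≥ 0`, and compare `h` with the solution
`s = sn_κ` of `s'' + κ s = 0`, `s 0 = 0`, `s' 0 = 1`, which is positive on `(0, π_κ)`. The
Wronskian `W = h' s - h s'` vanishes at `0` and `W' = (h'' + κ h) s ≥ 0`, so `W ≥ 0` and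
`(h / s)' = W / s² ≥ 0`. As `h / s → h' 0 ≥ 0` at `0⁺`, `h ≥ 0` on `(0, π_κ)`, and at `π_κ`
by continuity.
-/

open Set Filter Topology

lemma monotoneOn_of_hasDerivAt_nonneg {D : Set ℝ} (hD : Convex ℝ D) {f f' : ℝ → ℝ}
    (hf : ∀ x ∈ D, HasDerivAt f (f' x) x) (hf' : ∀ x ∈ interior D, 0 ≤ f' x) :
    MonotoneOn f D :=
  monotoneOn_of_hasDerivWithinAt_nonneg hD
    (fun x hx => (hf x hx).continuousAt.continuousWithinAt)
    (fun x hx => (hf x (interior_subset hx)).hasDerivWithinAt) hf'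

lemma MonotoneOn.le_of_tendsto_nhdsGT {α β : Type*} [LinearOrder α] [TopologicalSpace α]
    [OrderTopology α] [DenselyOrdered α] [NoMaxOrder α] [LinearOrder β] [TopologicalSpace β]
    [ClosedIicTopology β] {f : α → β} {a b : α} {L : β}
    (hf : MonotoneOn f (Ioo a b)) (hL : Tendsto f (𝓝[>] a) (𝓝 L)) {t : α} (ht : t ∈ Ioo a b) :
    L ≤ f t :=
  le_of_tendsto hL <| by
    filter_upwards [Ioo_mem_nhdsGT ht.1] with u hu
    exact hf ⟨hu.1, hu.2.trans ht.2⟩ ht hu.2.le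

lemma tendsto_div_of_hasDerivAt_of_eq_zero {f g : ℝ → ℝ} {f' g' x : ℝ}
    (hf : HasDerivAt f f' x) (hg : HasDerivAt g g' x) (hfx : f x = 0) (hgx : g x = 0)
    (hg' : g' ≠ 0) : Tendsto (fun t => f t / g t) (𝓝[≠] x) (𝓝 (f' / g')) := by
  refine (hf.tendsto_slope.div hg.tendsto_slope hg').congr' ?_
  filter_upwards [self_mem_nhdsWithin] with t ht
  have hne : t - x ≠ 0 := sub_ne_zero.mpr ht
  simp only [Pi.div_apply, slope_def_field, hfx, hgx, sub_zero]
  field_simp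

theorem sturm_comparison {q h h' h'' s s' : ℝ → ℝ} {b : ℝ} (hb : 0 ≤ b)
    (hh : ∀ t ∈ Icc 0 b, HasDerivAt h (h' t) t) (hh' : ∀ t ∈ Icc 0 b, HasDerivAt h' (h'' t) t)
    (hs : ∀ t ∈ Icc 0 b, HasDerivAt s (s' t) t)
    (hs' : ∀ t ∈ Icc 0 b, HasDerivAt s' (-q t * s t) t)
    (hq : ∀ t ∈ Icc 0 b, 0 ≤ h'' t + q t * h t) (hspos : ∀ t ∈ Ioo 0 b, 0 < s t)
    (h0 : h 0 = 0) (h'0 : 0 ≤ h' 0) (hs0 : s 0 = 0) (hs'0 : 0 < s' 0) : 0 ≤ h b := by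
  obtain rfl | hb := hb.eq_or_lt
  · exact h0.ge
  set W := fun t => h' t * s t - h t * s' t
  have hW : ∀ t ∈ Icc 0 b, HasDerivAt W ((h'' t + q t * h t) * s t) t := fun t ht =>
    (((hh' t ht).mul (hs t ht)).sub ((hh t ht).mul (hs' t ht))).congr_deriv (by ring)
  have hW_nonneg : ∀ t ∈ Icc 0 b, 0 ≤ W t := by
    have hmono : MonotoneOn W (Icc 0 b) := monotoneOn_of_hasDerivAt_nonneg (convex_Icc 0 b) hW
      (by rw [interior_Icc]; exact fun t ht =>
        mul_nonneg (hq t (Ioo_subset_Icc_self ht)) (hspos t ht).le)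
    intro t ht
    simpa [W, h0, hs0] using hmono (left_mem_Icc.mpr hb.le) ht ht.1
  have hratio : MonotoneOn (fun t => h t / s t) (Ioo 0 b) := by
    refine monotoneOn_of_hasDerivAt_nonneg (convex_Ioo 0 b)
      (fun t ht => (hh t (Ioo_subset_Icc_self ht)).div (hs t (Ioo_subset_Icc_self ht))
        (hspos t ht).ne') ?_
    rw [interior_Ioo]
    exact fun t ht => div_nonneg (hW_nonneg t (Ioo_subset_Icc_self ht)) (sq_nonneg _)
  have hlim : Tendsto (fun t => h t / s t) (𝓝[>] 0) (𝓝 (h' 0 / s' 0)) :=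
    (tendsto_div_of_hasDerivAt_of_eq_zero (hh 0 (left_mem_Icc.mpr hb.le))
      (hs 0 (left_mem_Icc.mpr hb.le)) h0 hs0 hs'0.ne').mono_left
      (nhdsWithin_mono 0 fun t ht => ne_of_gt ht)
  have hh_nonneg : ∀ t ∈ Ioo 0 b, 0 ≤ h t := fun t ht => by
    have := (div_nonneg h'0 hs'0.le).trans (hratio.le_of_tendsto_nhdsGT hlim ht)
    simpa using (le_div_iff₀ (hspos t ht)).mp this
  have hcont : ContinuousWithinAt h (Iio b) b :=
    (hh b (right_mem_Icc.mpr hb.le)).continuousAt.continuousWithinAt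
  exact ge_of_tendsto hcont.tendsto
    (by filter_upwards [Ioo_mem_nhdsLT hb] with t ht using hh_nonneg t ht)

noncomputable def sn (κ : ℝ) : ℝ → ℝ :=
  if 0 < κ then fun t => Real.sin (√κ * t) / √κ
  else if κ = 0 then fun t => t
  else fun t => Real.sinh (√(-κ) * t) / √(-κ)

noncomputable def cs (κ : ℝ) : ℝ → ℝ :=
  if 0 < κ then fun t => Real.cos (√κ * t)
  else if κ = 0 then fun _ => 1
  else fun t => Real.cosh (√(-κ) * t)

@[simp] lemma sn_zero (κ : ℝ) : sn κ 0 = 0 := by unfold sn; split_ifs <;> simp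

@[simp] lemma cs_zero (κ : ℝ) : cs κ 0 = 1 := by unfold cs; split_ifs <;> simp

lemma hasDerivAt_sn (κ t : ℝ) : HasDerivAt (sn κ) (cs κ t) t := by
  rcases lt_trichotomy κ 0 with hκ | rfl | hκ
  · have ha : √(-κ) ≠ 0 := (Real.sqrt_pos.mpr (neg_pos.mpr hκ)).ne'
    simp only [sn, cs, if_neg hκ.not_gt, if_neg hκ.ne]
    simpa [ha] using (((hasDerivAt_id t).const_mul √(-κ)).sinh).div_const √(-κ)
  · simpa [sn, cs] using hasDerivAt_id' t
  · have ha : √κ ≠ 0 := (Real.sqrt_pos.mpr hκ).ne'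
    simp only [sn, cs, if_pos hκ]
    simpa [ha] using (((hasDerivAt_id t).const_mul √κ).sin).div_const √κ

lemma hasDerivAt_cs (κ t : ℝ) : HasDerivAt (cs κ) (-κ * sn κ t) t := by
  rcases lt_trichotomy κ 0 with hκ | rfl | hκ
  · have ha : √(-κ) ≠ 0 := (Real.sqrt_pos.mpr (neg_pos.mpr hκ)).ne'
    have hsq : √(-κ) ^ 2 = -κ := Real.sq_sqrt (neg_nonneg.mpr hκ.le)
    simp only [sn, cs, if_neg hκ.not_gt, if_neg hκ.ne]
    convert ((hasDerivAt_id' t).const_mul √(-κ)).cosh using 1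
    field_simp
    rw [hsq, neg_mul]
  · simpa [sn, cs] using hasDerivAt_const t (1 : ℝ)
  · have ha : √κ ≠ 0 := (Real.sqrt_pos.mpr hκ).ne'
    have hsq : √κ ^ 2 = κ := Real.sq_sqrt hκ.le
    simp only [sn, cs, if_pos hκ]
    convert ((hasDerivAt_id' t).const_mul √κ).cos using 1
    field_simp
    rw [hsq]

lemma sn_pos {κ t : ℝ} (ht : 0 < t) (htπ : 0 < κ → t < Real.pi / √κ) : 0 < sn κ t := by
  rcases lt_trichotomy κ 0 with hκ | rfl | hκ
  · have ha : 0 < √(-κ) := Real.sqrt_pos.mpr (neg_pos.mpr hκ)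
    simp only [sn, if_neg hκ.not_gt, if_neg hκ.ne]
    exact div_pos (Real.sinh_pos_iff.mpr (by positivity)) ha
  · simpa [sn] using ht
  · have ha : 0 < √κ := Real.sqrt_pos.mpr hκ
    simp only [sn, if_pos hκ]
    have := htπ hκ
    rw [lt_div_iff₀ ha] at this
    exact div_pos (Real.sin_pos_of_pos_of_lt_pi (by positivity) (by linarith)) ha

theorem jacobi_comparison_general
    (κ r : ℝ) (f g f' g' f'' g'' : ℝ → ℝ)
    (hf : ∀ t ∈ Set.Icc (0 : ℝ) r, HasDerivAt f (f' t) t)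
    (hf' : ∀ t ∈ Set.Icc (0 : ℝ) r, HasDerivAt f' (f'' t) t)
    (hg : ∀ t ∈ Set.Icc (0 : ℝ) r, HasDerivAt g (g' t) t)
    (hg' : ∀ t ∈ Set.Icc (0 : ℝ) r, HasDerivAt g' (g'' t) t)
    (hineq : ∀ t ∈ Set.Icc (0 : ℝ) r, f'' t + κ * f t ≤ g'' t + κ * g t)
    (h0 : f 0 = g 0) (h0' : f' 0 ≤ g' 0) :
    ∀ t ∈ Set.Icc (0 : ℝ) r, (0 < κ → t ≤ Real.pi / Real.sqrt κ) → f t ≤ g t := by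
  intro t ht htπ
  have hsub : Icc 0 t ⊆ Icc 0 r := Icc_subset_Icc_right ht.2
  have hgf : 0 ≤ (g - f) t :=
    sturm_comparison (q := fun _ => κ) (h' := g' - f') (h'' := g'' - f'') ht.1
      (fun u hu => (hg u (hsub hu)).sub (hf u (hsub hu)))
      (fun u hu => (hg' u (hsub hu)).sub (hf' u (hsub hu)))
      (fun u _ => hasDerivAt_sn κ u) (fun u _ => hasDerivAt_cs κ u)
      (fun u hu => by simp only [Pi.sub_apply]; linarith [hineq u (hsub hu)])
      (fun u hu => sn_pos hu.1 fun hκ => hu.2.trans_le (htπ hκ))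
      (by simp [h0]) (by simp [h0']) (sn_zero κ) (by simp)
  simpa [sub_nonneg] using hgf

/-- Jacobi comparison lemma: if `f'' + κ f ≤ g'' + κ g` on `[0,r]`, `f 0 = g 0` and
`f' 0 ≤ g' 0`, with `f, g ≥ 0`, then `f ≤ g` on `[0, min {r, π_κ}]`. -/
theorem jacobi_comparison
    (κ r : ℝ) (hr : 0 ≤ r) (f g f' g' f'' g'' : ℝ → ℝ)
    (hf : ∀ t ∈ Set.Icc (0 : ℝ) r, HasDerivAt f (f' t) t)
    (hf' : ∀ t ∈ Set.Icc (0 : ℝ) r, HasDerivAt f' (f'' t) t)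
    (hg : ∀ t ∈ Set.Icc (0 : ℝ) r, HasDerivAt g (g' t) t)
    (hg' : ∀ t ∈ Set.Icc (0 : ℝ) r, HasDerivAt g' (g'' t) t)
    (hfpos : ∀ t ∈ Set.Icc (0 : ℝ) r, 0 ≤ f t)
    (hgpos : ∀ t ∈ Set.Icc (0 : ℝ) r, 0 ≤ g t)
    (hineq : ∀ t ∈ Set.Icc (0 : ℝ) r, f'' t + κ * f t ≤ g'' t + κ * g t)
    (h0 : f 0 = g 0) (h0' : f' 0 ≤ g' 0) :
    ∀ t ∈ Set.Icc (0 : ℝ) r, (0 < κ → t ≤ Real.pi / Real.sqrt κ) → f t ≤ g t :=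
  jacobi_comparison_general κ r f g f' g' f'' g'' hf hf' hg hg' hineq h0 h0'
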